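/- arXiv:2004.10227 — 10 statements merged into one kernel-verified Lean document; each statement's English description precedes it below -/
import Mathlib

section
/- Let G be a group and n ≥ 1. The conjugation quandle Conj(G) is n-locally reductive (i.e., (…((a▷b)▷b)…)▷b with n copies of b equals b for all a, b) if and only if G is an n-Engel group (i.e., [b,_n a] = 1 for all a, b ∈ G). -/
/-- The iterated Engel commutator: `engel b a 0 = a` and
`engel b a (k+1) = [b, engel b a k]`, where `[x, y] = x⁻¹ * y⁻¹ * x * y`. -/
def engel {G : Type*} [Group G] (b a : G) : ℕ → G
  | 0 => a
  | k + 1 => b⁻¹ * (engel b a k)⁻¹ * b * (engel b a k)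

section

variable {G : Type*} [Group G]

/-- The `(k+1)`-st iterate is `b` conjugated by `[b,_k a]`, and `e⁻¹ * b * e = b * [b, e]`. -/
theorem iterate_conj_succ_eq_mul_engel (a b : G) (k : ℕ) :
    (fun x : G => x⁻¹ * b * x)^[k + 1] a = b * engel b a (k + 1) := by
  induction k with
  | zero => simp only [zero_add, Function.iterate_one, engel]; group
  | succ k ih =>
    rw [Function.iterate_succ_apply', ih]
    simp only [engel]
    group

theorem iterate_conj_succ_eq_iff_engel_eq_one (a b : G) (k : ℕ) :
    (fun x : G => x⁻¹ * b * x)^[k + 1] a = b ↔ engel b a (k + 1) = 1 := by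
  rw [iterate_conj_succ_eq_mul_engel, mul_eq_left]

end

theorem conj_locally_reductive_iff_engel_general {G : Type*} [Group G] (n : ℕ) :
    (∀ a b : G, (fun x : G => x⁻¹ * b * x)^[n] a = b) ↔
      (∀ a b : G, engel b a n = 1) := by
  cases n with
  | zero =>
    simp only [Function.iterate_zero, id_eq, engel]
    exact ⟨fun h a _ => h a 1, fun h a b => (h a a).trans (h b b).symm⟩
  | succ k => exact forall₂_congr fun a b => iterate_conj_succ_eq_iff_engel_eq_one a b k

/-- Let `G` be a group and `n ≥ 1`. The conjugation quandle `Conj(G)` (with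
`x ▷ y = x⁻¹ * y * x`) is `n`-locally reductive, i.e. `(…((a ▷ b) ▷ b)…) ▷ b = b`
with `n` copies of `b` for all `a, b`, if and only if `G` is an `n`-Engel group,
i.e. `[b,_n a] = 1` for all `a, b ∈ G`. -/
theorem conj_locally_reductive_iff_engel {G : Type*} [Group G] (n : ℕ) (hn : 1 ≤ n) :
    (∀ a b : G, (fun x : G => x⁻¹ * b * x)^[n] a = b) ↔
      (∀ a b : G, engel b a n = 1) :=
  conj_locally_reductive_iff_engel_general n
end

section
/- Let G be a group and H ⊆ G a subset closed under conjugation. The conjugation quandle on H is n-locally reductive if and only if H is an n-Engel subset of G (i.e., [b,_n a] = 1 for all a, b ∈ H). -/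
lemma iterate_conj_eq_mul_engel {G : Type*} [Group G] (a b : G) (k : ℕ) :
    (fun x : G => x⁻¹ * b * x)^[k + 1] a = b * engel b a (k + 1) := by
  induction k with
  | zero => rw [Function.iterate_one]; simp only [engel]; group
  | succ k ih =>
    rw [Function.iterate_succ_apply', ih]
    simp only [engel]
    group

theorem conjSet_locally_reductive_iff_engel_subset_general {G : Type*} [Group G]
    (H : Set G) (n : ℕ) (hn : 1 ≤ n) :
    (∀ a ∈ H, ∀ b ∈ H, (fun x : G => x⁻¹ * b * x)^[n] a = b) ↔
      (∀ a ∈ H, ∀ b ∈ H, engel b a n = 1) := by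
  obtain ⟨k, rfl⟩ := Nat.exists_eq_add_of_le' hn
  simp only [iterate_conj_eq_mul_engel, mul_eq_left]

/-- Let `G` be a group and `H ⊆ G` a subset closed under conjugation. The conjugation
quandle on `H` (with `g ▷ h = g⁻¹ * h * g`) is `n`-locally reductive if and only if `H`
is an `n`-Engel subset of `G`, i.e. `[b,_n a] = 1` for all `a, b ∈ H`. -/
theorem conjSet_locally_reductive_iff_engel_subset {G : Type*} [Group G]
    (H : Set G) (hH : ∀ g : G, ∀ h ∈ H, g⁻¹ * h * g ∈ H) (n : ℕ) (hn : 1 ≤ n) :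
    (∀ a ∈ H, ∀ b ∈ H, (fun x : G => x⁻¹ * b * x)^[n] a = b) ↔
      (∀ a ∈ H, ∀ b ∈ H, engel b a n = 1) :=
  conjSet_locally_reductive_iff_engel_subset_general H n hn
end

section
/- Let Q be a quandle, α a congruence on Q, and suppose the quotient quandle Q/α is n-locally reductive and every congruence class [a]_α (as a subquandle of Q) is m-locally reductive. Then Q is (n+m)-locally reductive. -/
theorem extension_locally_reductive_general {Q : Type*} (op : Q → Q → Q)
    (α : Setoid Q)
    (n m : ℕ)
    (hquot : ∀ a b : Q, α.r ((fun x => op x b)^[n] a) b)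
    (hclass : ∀ a b : Q, α.r a b → (fun x => op x b)^[m] a = b) :
    ∀ a b : Q, (fun x => op x b)^[n + m] a = b := by
  intro a b
  rw [add_comm, Function.iterate_add_apply]
  exact hclass _ _ (hquot a b)

/-- Let `Q` be a quandle and `α` a congruence on `Q` (an equivalence relation compatible
with the operation and its inverse translations). If the quotient `Q/α` is `n`-locally
reductive and every congruence class (as a subquandle of `Q`) is `m`-locally reductive,
then `Q` is `(n+m)`-locally reductive. -/
theorem extension_locally_reductive {Q : Type*} (op : Q → Q → Q)
    (hidem : ∀ a, op a a = a)
    (hbij : ∀ a, Function.Bijective (op a))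
    (hdist : ∀ a b c, op a (op b c) = op (op a b) (op a c))
    (α : Setoid Q)
    (hcong : ∀ a b c d, α.r a b → α.r c d → α.r (op a c) (op b d))
    (hcong' : ∀ a b c d x y, α.r a b → α.r c d → op a x = c → op b y = d → α.r x y)
    (n m : ℕ)
    (hquot : ∀ a b : Q, α.r ((fun x => op x b)^[n] a) b)
    (hclass : ∀ a b : Q, α.r a b → (fun x => op x b)^[m] a = b) :
    ∀ a b : Q, (fun x => op x b)^[n + m] a = b :=
  extension_locally_reductive_general op α n m hquot hclass
end

section
/- If every orbit of a quandle Q (under the action of the inner automorphism group) is an n-locally reductive subquandle, then Q is (n+1)-locally reductive. -/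
/-- One step of the action generating the orbit: `q` is obtained from `p` by applying a
left translation by an element of `S`, or its inverse. -/
def orbRel {Q : Type*} (op : Q → Q → Q) (S : Set Q) (p q : Q) : Prop :=
  ∃ s ∈ S, q = op s p ∨ p = op s q

/-- The orbit of `x` in the subquandle `S`: all elements reachable from `x` by the group
generated by the left translations by elements of `S` (and their inverses). -/
def OrbIn {Q : Type*} (op : Q → Q → Q) (S : Set Q) (x : Q) : Set Q :=
  {y | Relation.ReflTransGen (orbRel op S) x y}

theorem op_mem_orbIn {Q : Type*} (op : Q → Q → Q) {S : Set Q} {s : Q} (hs : s ∈ S) (x : Q) :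
    op s x ∈ OrbIn op S x :=
  Relation.ReflTransGen.single ⟨s, hs, Or.inl rfl⟩

theorem orbits_locally_reductive_general {Q : Type*} (op : Q → Q → Q)
    (n : ℕ)
    (horb : ∀ a x y : Q, x ∈ OrbIn op Set.univ a → y ∈ OrbIn op Set.univ a →
      (fun z => op z y)^[n] x = y) :
    ∀ a b : Q, (fun z => op z b)^[n + 1] a = b := by
  intro a b
  rw [Function.iterate_succ_apply]
  exact horb b (op a b) b (op_mem_orbIn op (Set.mem_univ a) b) Relation.ReflTransGen.refl

/-- If every orbit of a quandle `Q` (under the action of the inner automorphism group)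
is an `n`-locally reductive subquandle, then `Q` is `(n+1)`-locally reductive. -/
theorem orbits_locally_reductive {Q : Type*} (op : Q → Q → Q)
    (hidem : ∀ a, op a a = a)
    (hbij : ∀ a, Function.Bijective (op a))
    (hdist : ∀ a b c, op a (op b c) = op (op a b) (op a c))
    (n : ℕ)
    (horb : ∀ a x y : Q, x ∈ OrbIn op Set.univ a → y ∈ OrbIn op Set.univ a →
      (fun z => op z y)^[n] x = y) :
    ∀ a b : Q, (fun z => op z b)^[n + 1] a = b :=
  orbits_locally_reductive_general op n horb
end

section
/- Let Q be a quandle. If the inner automorphism group Inn(Q) is an n-Engel group, then Q is (n+1)-locally reductive. -/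
open Quandles

/-- The inner automorphism group of a quandle: the subgroup of permutations of `Q`
generated by the left translations `L_a`. -/
def InnGrp (Q : Type*) [Quandle Q] : Subgroup (Equiv.Perm Q) :=
  Subgroup.closure (Set.range fun a : Q => (Rack.act' a : Equiv.Perm Q))

theorem map_engel {G H : Type*} [Group G] [Group H] (f : G →* H) (b a : G) (k : ℕ) :
    f (engel b a k) = engel (f b) (f a) k := by
  induction k with
  | zero => rfl
  | succ k ih => simp [engel, ih]

theorem Rack.engel_act'_eq_act'_mul_act'_iterate_inv {R : Type*} [Rack R] (a b : R) (k : ℕ) :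
    engel (act' b)⁻¹ (act' b * (act' a)⁻¹) k = act' b * (act' ((· ◃ b)^[k] a))⁻¹ := by
  induction k with
  | zero => rfl
  | succ k ih =>
    rw [engel, ih, Function.iterate_succ_apply', ad_conj]
    group

theorem Quandle.iterate_act_right_eq_of_engel_eq_one {Q : Type*} [Quandle Q] {a b : Q} {n : ℕ}
    (h : engel (Rack.act' b)⁻¹ (Rack.act' b * (Rack.act' a)⁻¹) n = 1) :
    (· ◃ b)^[n + 1] a = b := by
  rw [Rack.engel_act'_eq_act'_mul_act'_iterate_inv, mul_inv_eq_one] at h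
  rw [Function.iterate_succ_apply', ← Rack.act'_apply, ← h, Rack.act'_apply, Quandle.fix]

theorem act'_mem_innGrp {Q : Type*} [Quandle Q] (a : Q) : Rack.act' a ∈ InnGrp Q :=
  Subgroup.subset_closure ⟨a, rfl⟩

/-- If the inner automorphism group `Inn(Q)` of a quandle `Q` is an `n`-Engel group,
then `Q` is `(n+1)`-locally reductive. -/
theorem engel_inn_implies_locally_reductive {Q : Type*} [Quandle Q] (n : ℕ)
    (hEngel : ∀ g h : InnGrp Q, engel h g n = 1) :
    ∀ a b : Q, (fun z => z ◃ b)^[n + 1] a = b := by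
  intro a b
  let La : InnGrp Q := ⟨Rack.act' a, act'_mem_innGrp a⟩
  let Lb : InnGrp Q := ⟨Rack.act' b, act'_mem_innGrp b⟩
  apply Quandle.iterate_act_right_eq_of_engel_eq_one
  simpa [map_engel] using congrArg (InnGrp Q).subtype (hEngel (Lb * La⁻¹) Lb⁻¹)
end

section
/- Let Q be a quandle belonging to the class tOS_n for some n (every orbit series stabilizes at a one-element quandle within n steps) and let P be a subquandle of Q. Then P belongs to tOS_n. -/
/-- An orbit series starting at the subquandle `S`: a chain `S = Q₀ ≥ Q₁ ≥ …` where
`Q_{i+1} = Orb(x_i, Q_i)` is the orbit of the chosen element `x_i ∈ Q_i`. -/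
def IsOrbitSeriesFrom {Q : Type*} (op : Q → Q → Q) (S : Set Q)
    (Qs : ℕ → Set Q) (xs : ℕ → Q) : Prop :=
  Qs 0 = S ∧ ∀ i, xs i ∈ Qs i ∧ Qs (i + 1) = OrbIn op (Qs i) (xs i)

/-!
An orbit series `P = P₀ ≥ P₁ ≥ …` of the subquandle `P`, driven by the points `xᵢ`, is
dominated term by term by the chain `Q = Q₀ ≥ Q₁ ≥ …` with `Qᵢ₊₁ = Orb(xᵢ, Qᵢ)`, because
orbits grow with the set of translations acting. Since `xᵢ ∈ Pᵢ ⊆ Qᵢ`, that chain is an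
orbit series of `Q`, so `Qₙ` is a singleton, and the nonempty set `Pₙ ⊆ Qₙ` equals it.
-/

section

variable {Q : Type*} (op : Q → Q → Q)

theorem orbIn_mono {S T : Set Q} (hST : S ⊆ T) (x : Q) : OrbIn op S x ⊆ OrbIn op T x :=
  fun _ => Relation.ReflTransGen.mono (r := orbRel op S) (fun _ _ ⟨s, hs, h⟩ => ⟨s, hST hs, h⟩) _ _

def orbitChain (S : Set Q) (xs : ℕ → Q) : ℕ → Set Q
  | 0 => S
  | i + 1 => OrbIn op (orbitChain S xs i) (xs i)

variable {op}

theorem IsOrbitSeriesFrom.subset_orbitChain {S T : Set Q} {Qs : ℕ → Set Q} {xs : ℕ → Q}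
    (h : IsOrbitSeriesFrom op S Qs xs) (hST : S ⊆ T) (i : ℕ) :
    Qs i ⊆ orbitChain op T xs i := by
  induction i with
  | zero => simpa only [h.1, orbitChain] using hST
  | succ i ih =>
    rw [(h.2 i).2]
    exact orbIn_mono op ih (xs i)

theorem IsOrbitSeriesFrom.exists_superseries {S T : Set Q} {Qs : ℕ → Set Q} {xs : ℕ → Q}
    (h : IsOrbitSeriesFrom op S Qs xs) (hST : S ⊆ T) :
    ∃ Qs', IsOrbitSeriesFrom op T Qs' xs ∧ ∀ i, Qs i ⊆ Qs' i :=
  ⟨orbitChain op T xs,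
    ⟨rfl, fun i => ⟨h.subset_orbitChain hST i (h.2 i).1, rfl⟩⟩,
    h.subset_orbitChain hST⟩

theorem IsOrbitSeriesFrom.nonempty {S : Set Q} {Qs : ℕ → Set Q} {xs : ℕ → Q}
    (h : IsOrbitSeriesFrom op S Qs xs) (i : ℕ) : (Qs i).Nonempty :=
  ⟨xs i, (h.2 i).1⟩

end

theorem tOSn_closed_under_subquandles_general {Q : Type*} (op : Q → Q → Q)
    (n : ℕ)
    (hQ : ∀ Qs xs, IsOrbitSeriesFrom op Set.univ Qs xs → ∃ a, Qs n = {a})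
    (P : Set Q) :
    ∀ Qs xs, IsOrbitSeriesFrom op P Qs xs → ∃ a, Qs n = {a} := by
  intro Qs xs hP
  obtain ⟨Qs', hQs', hsub⟩ := hP.exists_superseries (Set.subset_univ P)
  obtain ⟨a, ha⟩ := hQ Qs' xs hQs'
  exact ⟨a, (hP.nonempty n).subset_singleton_iff.mp (ha ▸ hsub n)⟩

/-- If a quandle `Q` belongs to the class `tOS_n` (every orbit series of `Q` reaches a
one-element quandle within `n` steps) and `P` is a subquandle of `Q`, then `P` belongs
to `tOS_n`. -/
theorem tOSn_closed_under_subquandles {Q : Type*} (op : Q → Q → Q)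
    (hidem : ∀ a, op a a = a)
    (hbij : ∀ a, Function.Bijective (op a))
    (hdist : ∀ a b c, op a (op b c) = op (op a b) (op a c))
    (n : ℕ)
    (hQ : ∀ Qs xs, IsOrbitSeriesFrom op Set.univ Qs xs → ∃ a, Qs n = {a})
    (P : Set Q)
    (hPop : ∀ a ∈ P, ∀ b ∈ P, op a b ∈ P)
    (hPinv : ∀ a ∈ P, ∀ b ∈ P, ∀ c, op a c = b → c ∈ P) :
    ∀ Qs xs, IsOrbitSeriesFrom op P Qs xs → ∃ a, Qs n = {a} :=
  tOSn_closed_under_subquandles_general op n hQ P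
end

section
/- Let Q be a quandle satisfying the descending orbit series condition (every orbit series eventually stabilizes). Then every orbit series of Q is principal, i.e., for every orbit series {Q_i} there exists x ∈ ⋂_i Q_i such that Q_{i+1} = Orb(x, Q_i) for all i. -/
section

variable {Q : Type*} {op : Q → Q → Q} {S T : Set Q} {x y : Q}

instance orbRel.instSymm (op : Q → Q → Q) (S : Set Q) : Std.Symm (orbRel op S) where
  symm _ _ := fun ⟨s, hs, h⟩ => ⟨s, hs, h.symm⟩

lemma orbRel_mono (hST : S ⊆ T) : orbRel op S ≤ orbRel op T :=
  fun _ _ ⟨s, hs, h⟩ => ⟨s, hST hs, h⟩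

lemma mem_OrbIn_comm (h : y ∈ OrbIn op S x) : x ∈ OrbIn op S y :=
  Std.Symm.symm _ _ h

lemma OrbIn_eq_of_mem (h : y ∈ OrbIn op S x) : OrbIn op S y = OrbIn op S x :=
  Set.ext fun _ =>
    ⟨(Relation.ReflTransGen.trans h ·), (Relation.ReflTransGen.trans (mem_OrbIn_comm h) ·)⟩

def IsOrbClosed (op : Q → Q → Q) (S : Set Q) : Prop :=
  ∀ p ∈ S, ∀ q, orbRel op S p q → q ∈ S

lemma isOrbClosed_univ : IsOrbClosed op Set.univ :=
  fun _ _ _ _ => Set.mem_univ _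

lemma IsOrbClosed.OrbIn_subset (hS : IsOrbClosed op S) (hx : x ∈ S) : OrbIn op S x ⊆ S := by
  intro y hy
  induction hy with
  | refl => exact hx
  | tail _ hpq ih => exact hS _ ih _ hpq

lemma IsOrbClosed.orbIn (hS : IsOrbClosed op S) (hx : x ∈ S) :
    IsOrbClosed op (OrbIn op S x) :=
  fun _ hp _ hpq => hp.tail (orbRel_mono (hS.OrbIn_subset hx) _ _ hpq)

namespace IsOrbitSeriesFrom

variable {Qs : ℕ → Set Q} {xs : ℕ → Q}

lemma isOrbClosed (h : IsOrbitSeriesFrom op S Qs xs) (hS : IsOrbClosed op S) (i : ℕ) :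
    IsOrbClosed op (Qs i) := by
  induction i with
  | zero => exact h.1 ▸ hS
  | succ i ih => exact (h.2 i).2 ▸ ih.orbIn (h.2 i).1

lemma antitone (h : IsOrbitSeriesFrom op S Qs xs) (hS : IsOrbClosed op S) : Antitone Qs :=
  antitone_nat_of_succ_le fun i => (h.2 i).2 ▸ (h.isOrbClosed hS i).OrbIn_subset (h.2 i).1

lemma succ_eq_OrbIn_of_mem (h : IsOrbitSeriesFrom op S Qs xs) {i : ℕ} (hx : x ∈ Qs (i + 1)) :
    Qs (i + 1) = OrbIn op (Qs i) x := by
  rw [(h.2 i).2] at hx ⊢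
  exact (OrbIn_eq_of_mem hx).symm

lemma succ_succ_eq (h : IsOrbitSeriesFrom op S Qs xs) {k : ℕ} (hk : Qs (k + 1) = Qs k) :
    Qs (k + 2) = Qs (k + 1) := by
  calc Qs (k + 2) = OrbIn op (Qs (k + 1)) (xs (k + 1)) := (h.2 (k + 1)).2
    _ = OrbIn op (Qs k) (xs (k + 1)) := by rw [hk]
    _ = Qs (k + 1) := (h.succ_eq_OrbIn_of_mem (h.2 (k + 1)).1).symm

lemma succ_eq_of_le (h : IsOrbitSeriesFrom op S Qs xs) {k : ℕ} (hk : Qs (k + 1) = Qs k)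
    {j : ℕ} (hkj : k ≤ j) : Qs (j + 1) = Qs j := by
  induction j, hkj using Nat.le_induction with
  | base => exact hk
  | succ j _ ih => exact h.succ_succ_eq ih

lemma eq_of_le (h : IsOrbitSeriesFrom op S Qs xs) {k : ℕ} (hk : Qs (k + 1) = Qs k) {j : ℕ}
    (hkj : k ≤ j) : Qs j = Qs k := by
  induction j, hkj using Nat.le_induction with
  | base => rfl
  | succ j hkj ih => exact (h.succ_eq_of_le hk hkj).trans ih

lemma mem_of_succ_eq (h : IsOrbitSeriesFrom op S Qs xs) (hS : IsOrbClosed op S) {k : ℕ}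
    (hk : Qs (k + 1) = Qs k) (i : ℕ) : xs k ∈ Qs i := by
  rcases le_total i k with hik | hki
  · exact h.antitone hS hik (h.2 k).1
  · exact h.eq_of_le hk hki ▸ (h.2 k).1

end IsOrbitSeriesFrom

end

theorem descending_implies_principal_general {Q : Type*} (op : Q → Q → Q)
    (hOS : ∀ Qs xs, IsOrbitSeriesFrom op Set.univ Qs xs → ∃ k, Qs (k + 1) = Qs k) :
    ∀ Qs xs, IsOrbitSeriesFrom op Set.univ Qs xs →
      ∃ x : Q, (∀ i, x ∈ Qs i) ∧ ∀ i, Qs (i + 1) = OrbIn op (Qs i) x := by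
  intro Qs xs h
  obtain ⟨k, hk⟩ := hOS Qs xs h
  have hmem := h.mem_of_succ_eq isOrbClosed_univ hk
  exact ⟨xs k, hmem, fun i => h.succ_eq_OrbIn_of_mem (hmem (i + 1))⟩

/-- If a quandle `Q` satisfies the descending orbit series condition (every orbit series
stabilizes), then every orbit series of `Q` is principal: there exists `x` in the
intersection of the series such that `Q_{i+1} = Orb(x, Q_i)` for all `i`. -/
theorem descending_implies_principal {Q : Type*} (op : Q → Q → Q)
    (hidem : ∀ a, op a a = a)
    (hbij : ∀ a, Function.Bijective (op a))
    (hdist : ∀ a b c, op a (op b c) = op (op a b) (op a c))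
    (hOS : ∀ Qs xs, IsOrbitSeriesFrom op Set.univ Qs xs → ∃ k, Qs (k + 1) = Qs k) :
    ∀ Qs xs, IsOrbitSeriesFrom op Set.univ Qs xs →
      ∃ x : Q, (∀ i, x ∈ Qs i) ∧ ∀ i, Qs (i + 1) = OrbIn op (Qs i) x :=
  descending_implies_principal_general op hOS
end

section
/- The class of quandles with no non-trivial connected subquandles is closed under arbitrary direct products: if {Q_i}_{i∈I} is a family of quandles none of which has a connected subquandle with more than one element, then the product quandle ∏_{i∈I} Q_i has no connected subquandle with more than one element. -/
/-! Each projection `πᵢ` preserves the operation, so it maps a connected subquandle `S` of the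
product onto a connected subset `πᵢ S` of `Qᵢ`. This image is again a subquandle: left division
in `πᵢ S` lifts to `S` because left translations in every factor are bijective. Hence every
`πᵢ S` has at most one element, and so has `S`. -/

section Orbits

variable {Q R : Type*} {op : Q → Q → Q} {op' : R → R → R}

def IsSubquandle (op : Q → Q → Q) (S : Set Q) : Prop :=
  (∀ a ∈ S, ∀ b ∈ S, op a b ∈ S) ∧ ∀ a ∈ S, ∀ b ∈ S, ∀ c, op a c = b → c ∈ S

def IsConnectedIn (op : Q → Q → Q) (S : Set Q) : Prop :=
  ∃ x ∈ S, OrbIn op S x = S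

theorem IsSubquandle.orbIn_subset {S : Set Q} (hS : IsSubquandle op S) {x : Q} (hx : x ∈ S) :
    OrbIn op S x ⊆ S := by
  intro y hy
  induction hy with
  | refl => exact hx
  | tail _ hstep ih =>
    obtain ⟨s, hs, hsp | hsp⟩ := hstep
    · exact hsp ▸ hS.1 s hs _ ih
    · exact hS.2 s hs _ ih _ hsp.symm

theorem image_orbIn_subset {f : Q → R} (hf : ∀ a b, f (op a b) = op' (f a) (f b))
    (S : Set Q) (x : Q) : f '' OrbIn op S x ⊆ OrbIn op' (f '' S) (f x) := by
  rintro _ ⟨y, hy, rfl⟩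
  refine Relation.ReflTransGen.lift f ?_ x y hy
  rintro p q ⟨s, hs, hsp | hsp⟩
  · exact ⟨f s, Set.mem_image_of_mem f hs, .inl (hsp ▸ hf s p)⟩
  · exact ⟨f s, Set.mem_image_of_mem f hs, .inr (hsp ▸ hf s q)⟩

theorem IsConnectedIn.image {f : Q → R} (hf : ∀ a b, f (op a b) = op' (f a) (f b))
    {S : Set Q} (hS : IsConnectedIn op S) (hfS : IsSubquandle op' (f '' S)) :
    IsConnectedIn op' (f '' S) := by
  obtain ⟨x, hx, hxS⟩ := hS
  refine ⟨f x, Set.mem_image_of_mem f hx, (hfS.orbIn_subset ⟨x, hx, rfl⟩).antisymm ?_⟩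
  conv_lhs => rw [← hxS]
  exact image_orbIn_subset hf S x

end Orbits

section Product

variable {I : Type*} {Q : I → Type*} (op : ∀ i, Q i → Q i → Q i)

def piOp : (∀ i, Q i) → (∀ i, Q i) → ∀ i, Q i := fun a b i => op i (a i) (b i)

variable {op}

theorem IsSubquandle.image_eval (hbij : ∀ i a, Function.Bijective (op i a))
    {S : Set (∀ i, Q i)} (hS : IsSubquandle (piOp op) S) (i : I) :
    IsSubquandle (op i) (Function.eval i '' S) := by
  refine ⟨?_, ?_⟩
  · rintro _ ⟨a, ha, rfl⟩ _ ⟨b, hb, rfl⟩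
    exact ⟨piOp op a b, hS.1 a ha b hb, rfl⟩
  · rintro _ ⟨a, ha, rfl⟩ _ ⟨b, hb, rfl⟩ c hc
    choose d hd using fun j => (hbij j (a j)).2 (b j)
    exact ⟨d, hS.2 a ha b hb d (funext hd), (hbij i (a i)).1 (by rw [hd i, hc])⟩

end Product

theorem no_connected_subquandles_prod_general {I : Type*} {Q : I → Type*}
    (op : ∀ i, Q i → Q i → Q i)
    (hbij : ∀ i a, Function.Bijective (op i a))
    (hfac : ∀ i (S : Set (Q i)), (∀ a ∈ S, ∀ b ∈ S, op i a b ∈ S) →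
      (∀ a ∈ S, ∀ b ∈ S, ∀ c, op i a c = b → c ∈ S) →
      (∃ x ∈ S, OrbIn (op i) S x = S) → S.Subsingleton) :
    ∀ S : Set (∀ i, Q i),
      (∀ a ∈ S, ∀ b ∈ S, (fun i => op i (a i) (b i)) ∈ S) →
      (∀ a ∈ S, ∀ b ∈ S, ∀ c, (fun i => op i (a i) (c i)) = b → c ∈ S) →
      (∃ x ∈ S, OrbIn (fun a b i => op i (a i) (b i)) S x = S) → S.Subsingleton := by
  intro S hmul hdiv hconn
  have hS : IsSubquandle (piOp op) S := ⟨hmul, hdiv⟩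
  have hproj : ∀ i, (Function.eval i '' S).Subsingleton := fun i =>
    have hSi := hS.image_eval hbij i
    hfac i _ hSi.1 hSi.2 (IsConnectedIn.image (fun _ _ => rfl) hconn hSi)
  intro a ha b hb
  funext i
  exact hproj i ⟨a, ha, rfl⟩ ⟨b, hb, rfl⟩

/-- The class of quandles with no non-trivial connected subquandles is closed under
arbitrary direct products: if `{Q_i}` is a family of quandles none of which has a
connected subquandle with more than one element, then the product quandle `∏ᵢ Q_i`
(with componentwise operation) has no connected subquandle with more than one
element. -/
theorem no_connected_subquandles_prod {I : Type*} {Q : I → Type*}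
    (op : ∀ i, Q i → Q i → Q i)
    (hidem : ∀ i a, op i a a = a)
    (hbij : ∀ i a, Function.Bijective (op i a))
    (hdist : ∀ i a b c, op i a (op i b c) = op i (op i a b) (op i a c))
    (hfac : ∀ i (S : Set (Q i)), (∀ a ∈ S, ∀ b ∈ S, op i a b ∈ S) →
      (∀ a ∈ S, ∀ b ∈ S, ∀ c, op i a c = b → c ∈ S) →
      (∃ x ∈ S, OrbIn (op i) S x = S) → S.Subsingleton) :
    ∀ S : Set (∀ i, Q i),
      (∀ a ∈ S, ∀ b ∈ S, (fun i => op i (a i) (b i)) ∈ S) →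
      (∀ a ∈ S, ∀ b ∈ S, ∀ c, (fun i => op i (a i) (c i)) = b → c ∈ S) →
      (∃ x ∈ S, OrbIn (fun a b i => op i (a i) (b i)) S x = S) → S.Subsingleton :=
  no_connected_subquandles_prod_general op hbij hfac
end

section
/- Every subquandle of the Takasaki quandle Alex(ℤ, −) (the quandle on ℤ with a▷b = 2a − b) is of the form c + aℤ for some integers a ≥ 0 and c; consequently, Alex(ℤ, −) has no connected subquandle with more than one element. -/
/-!
Reflecting `s - (k - 1) d` through `s + k d` gives `s + (k + 1) d`, so a subquandle containing
`s` and `t` contains the whole progression `s + ℤ (s - t)`. For a subquandle `S ⊆ ℤ` with a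
minimal positive difference `n`, taking that progression through one element `s₀` and reducing
any other `s ∈ S` modulo `n` shows `S = s₀ + nℤ`.

Every left translation `p ↦ 2s - p` with `s ∈ s₀ + nℤ` preserves each class modulo `2n`, so the
orbit of `s₀` misses `s₀ + n`; a connected subquandle therefore has `n = 0`.
-/

theorem add_zsmul_sub_mem_of_reflection_closed {A : Type*} [AddCommGroup A] {S : Set A}
    (hS : ∀ a ∈ S, ∀ b ∈ S, 2 • a - b ∈ S) {s t : A} (hs : s ∈ S) (ht : t ∈ S) (k : ℤ) :
    s + k • (s - t) ∈ S := by
  suffices h : ∀ k : ℤ, s + k • (s - t) ∈ S ∧ s + (k + 1) • (s - t) ∈ S from (h k).1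
  intro k
  induction k using Int.induction_on with
  | zero => exact ⟨by simpa using hs, by simpa [two_nsmul, add_sub_assoc] using hS s hs t ht⟩
  | succ n ih =>
    refine ⟨ih.2, ?_⟩
    convert hS _ ih.2 _ ih.1 using 1
    module
  | pred n ih =>
    refine ⟨?_, by simpa using ih.1⟩
    convert hS _ ih.1 _ ih.2 using 1
    module

theorem two_mul_dvd_sub_of_mem_orbIn {R : Type*} [CommRing R] {S : Set R} {m x y : R}
    (hS : ∀ s ∈ S, m ∣ s - x) (hy : y ∈ OrbIn (fun a b : R => 2 * a - b) S x) :
    2 * m ∣ y - x := by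
  induction hy with
  | refl => simp
  | @tail p q _ hpq ih =>
    obtain ⟨s, hs, hstep⟩ := hpq
    have hq : q - x = 2 * (s - x) - (p - x) := by
      rcases hstep with h | h <;> linear_combination h
    rw [hq]
    exact dvd_sub (mul_dvd_mul_left 2 (hS s hs)) ih

namespace Int

variable {S : Set ℤ}

theorem add_mul_sub_mem_of_reflection_closed (hS : ∀ a ∈ S, ∀ b ∈ S, 2 * a - b ∈ S)
    {s t : ℤ} (hs : s ∈ S) (ht : t ∈ S) (k : ℤ) : s + (s - t) * k ∈ S := by
  have hS' : ∀ a ∈ S, ∀ b ∈ S, 2 • a - b ∈ S := fun a ha b hb => by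
    simpa [nsmul_eq_mul] using hS a ha b hb
  simpa [mul_comm] using add_zsmul_sub_mem_of_reflection_closed hS' hs ht k

theorem exists_minimal_pos_sub_of_nontrivial (hS : S.Nontrivial) :
    ∃ n, (0 < n ∧ ∃ s ∈ S, ∃ t ∈ S, s - t = n) ∧
      ∀ s ∈ S, ∀ t ∈ S, 0 < s - t → n ≤ s - t := by
  obtain ⟨x, hx, y, hy, hxy⟩ := hS
  have hpos : ∃ d, 0 < d ∧ ∃ s ∈ S, ∃ t ∈ S, s - t = d := by
    rcases hxy.lt_or_gt with h | h
    · exact ⟨y - x, by omega, y, hy, x, hx, rfl⟩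
    · exact ⟨x - y, by omega, x, hx, y, hy, rfl⟩
  obtain ⟨n, hn, hmin⟩ := exists_least_of_bdd ⟨0, fun _ hd => hd.1.le⟩ hpos
  exact ⟨n, hn, fun s hs t ht hst => hmin _ ⟨hst, s, hs, t, ht, rfl⟩⟩

theorem dvd_sub_of_minimal_pos_sub (hS : ∀ a ∈ S, ∀ b ∈ S, 2 * a - b ∈ S) {n s₀ t₀ : ℤ}
    (hn : 0 < n) (hs₀ : s₀ ∈ S) (ht₀ : t₀ ∈ S) (hst₀ : s₀ - t₀ = n)
    (hmin : ∀ s ∈ S, ∀ t ∈ S, 0 < s - t → n ≤ s - t) {s : ℤ} (hs : s ∈ S) :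
    n ∣ s - s₀ := by
  have hq : s₀ + n * ((s - s₀) / n) ∈ S := by
    simpa [hst₀] using add_mul_sub_mem_of_reflection_closed hS hs₀ ht₀ ((s - s₀) / n)
  have hr : s - (s₀ + n * ((s - s₀) / n)) = (s - s₀) % n := by
    have := emod_add_mul_ediv (s - s₀) n
    omega
  have hr_lt : (s - s₀) % n < n := emod_lt_of_pos _ hn
  have hr_nonneg : 0 ≤ (s - s₀) % n := emod_nonneg _ hn.ne'
  refine dvd_of_emod_eq_zero (hr_nonneg.eq_or_lt.resolve_right fun hr_pos => ?_).symm
  have := hmin s hs _ hq (hr ▸ hr_pos)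
  omega

theorem exists_eq_add_mul_of_reflection_closed (hne : S.Nonempty)
    (hS : ∀ a ∈ S, ∀ b ∈ S, 2 * a - b ∈ S) :
    ∃ a c : ℤ, 0 ≤ a ∧ S = {x : ℤ | ∃ k : ℤ, x = c + a * k} := by
  rcases S.subsingleton_or_nontrivial with hsub | hnt
  · obtain ⟨c, hc⟩ := hne
    refine ⟨0, c, le_rfl, ?_⟩
    ext x
    simpa using ⟨fun hx => hsub hx hc, fun hx => hx ▸ hc⟩
  obtain ⟨n, ⟨hn, s₀, hs₀, t₀, ht₀, hst₀⟩, hmin⟩ := exists_minimal_pos_sub_of_nontrivial hnt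
  refine ⟨n, s₀, hn.le, Set.ext fun x => ⟨fun hx => ?_, ?_⟩⟩
  · obtain ⟨k, hk⟩ := dvd_sub_of_minimal_pos_sub hS hn hs₀ ht₀ hst₀ hmin hx
    exact ⟨k, by omega⟩
  · rintro ⟨k, rfl⟩
    simpa [hst₀] using add_mul_sub_mem_of_reflection_closed hS hs₀ ht₀ k

theorem subsingleton_of_orbIn_eq (hS : ∀ a ∈ S, ∀ b ∈ S, 2 * a - b ∈ S) {x : ℤ}
    (hx : x ∈ S) (horb : OrbIn (fun a b : ℤ => 2 * a - b) S x = S) : S.Subsingleton := by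
  obtain ⟨a, c, ha, hSeq⟩ := exists_eq_add_mul_of_reflection_closed ⟨x, hx⟩ hS
  obtain ⟨k, rfl⟩ : ∃ k, x = c + a * k := by rwa [hSeq] at hx
  have hdvd : ∀ s ∈ S, a ∣ s - (c + a * k) := by
    rw [hSeq]
    rintro _ ⟨j, rfl⟩
    exact ⟨j - k, by ring⟩
  have hnext : c + a * k + a ∈ OrbIn (fun a b : ℤ => 2 * a - b) S (c + a * k) := by
    rw [horb, hSeq]
    exact ⟨k + 1, by ring⟩
  have h2a : 2 * a ∣ a := by simpa using two_mul_dvd_sub_of_mem_orbIn hdvd hnext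
  obtain rfl : a = 0 := by
    by_contra h
    have := Int.le_of_dvd (by omega) h2a
    omega
  simp [hSeq]

end Int

/-- Every (nonempty) subquandle of the Takasaki quandle `Alex(ℤ, −)` (the quandle on `ℤ`
with `a ▷ b = 2a − b`) is of the form `c + aℤ` for some integers `a ≥ 0` and `c`;
consequently, `Alex(ℤ, −)` has no connected subquandle with more than one element. -/
theorem takasaki_int_subquandles :
    (∀ S : Set ℤ, S.Nonempty → (∀ a ∈ S, ∀ b ∈ S, 2 * a - b ∈ S) →
      ∃ a c : ℤ, 0 ≤ a ∧ S = {x : ℤ | ∃ k : ℤ, x = c + a * k}) ∧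
    (∀ S : Set ℤ, S.Nonempty → (∀ a ∈ S, ∀ b ∈ S, 2 * a - b ∈ S) →
      (∃ x ∈ S, OrbIn (fun a b : ℤ => 2 * a - b) S x = S) → S.Subsingleton) :=
  ⟨fun _ hne hS => Int.exists_eq_add_mul_of_reflection_closed hne hS,
    fun _ _ hS ⟨_, hx, horb⟩ => Int.subsingleton_of_orbIn_eq hS hx horb⟩
end

section
/- Let G be a simple group, g ∈ G of order two, and let ĝ be conjugation by g. If G has exponent dividing 2^k, then the generalized Alexander quandle Q = Alex(G, ĝ) with operation x▷y = ĝ(y x^{-1}) x satisfies the identity: the (k+1)-fold right iteration (…((a▷1)▷1)…)▷1 equals 1 for every a ∈ Q. More precisely, defining t(x) = ĝ(x)^{-1} x, one has t^n(x) = t(x)^{2^{n-1}} for all n ≥ 1 and x ∈ G. -/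
/-!
For an involutive endomorphism `φ` the map `t x = (φ x)⁻¹ * x` sends every `x` to an element
inverted by `φ`, and on such an element `y` it acts as squaring: `t y = (φ y)⁻¹ * y = y * y`.
Since powers of `y` are again inverted by `φ`, iterating gives `tⁿ⁺¹ x = (t x)^(2^n)`, which is
`1` once `2^n` kills every element. Conjugation by an element of order two is such a `φ`, and
`a ▷ 1 = t a` in `Alex(G, ĝ)`.
-/

section Twist

variable {G : Type*} [Group G]

def twist (φ : G →* G) (x : G) : G := (φ x)⁻¹ * x

section Involutive

variable {φ : G →* G} (hφ : ∀ x, φ (φ x) = x)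
include hφ

theorem map_twist_of_involutive (x : G) : φ (twist φ x) = (twist φ x)⁻¹ := by
  simp only [twist, map_mul, map_inv, hφ, mul_inv_rev, inv_inv]

theorem twist_twist_pow_of_involutive (x : G) (m : ℕ) :
    twist φ (twist φ x ^ m) = twist φ x ^ (2 * m) := by
  rw [twist, map_pow, map_twist_of_involutive hφ, inv_pow, inv_inv, two_mul, pow_add]

theorem twist_iterate_succ_of_involutive (x : G) (n : ℕ) :
    (twist φ)^[n + 1] x = twist φ x ^ 2 ^ n := by
  induction n with
  | zero => simp
  | succ n ih =>
    rw [Function.iterate_succ_apply', ih, twist_twist_pow_of_involutive hφ, pow_succ', mul_comm]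

end Involutive

theorem conj_inv_conj_inv_of_sq_eq_one {g : G} (hg : g ^ 2 = 1) (x : G) :
    g⁻¹ * (g⁻¹ * x * g) * g = x := by
  rw [sq] at hg
  rw [inv_eq_of_mul_eq_one_right hg, mul_assoc, mul_assoc, hg, mul_one, ← mul_assoc, hg, one_mul]

end Twist

theorem alexander_simple_exponent_two_pow_general {G : Type*} [Group G]
    (g : G) (hg : orderOf g = 2)
    (k : ℕ) (hexp : ∀ x : G, x ^ (2 ^ k) = 1) :
    (∀ (x : G) (n : ℕ), 1 ≤ n →
      (fun z : G => (g⁻¹ * z * g)⁻¹ * z)^[n] x =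
        ((g⁻¹ * x * g)⁻¹ * x) ^ (2 ^ (n - 1))) ∧
    (∀ a : G, (fun z : G => (g⁻¹ * (1 * z⁻¹) * g) * z)^[k + 1] a = 1) := by
  let φ : G →* G := (MulAut.conj g⁻¹).toMonoidHom
  have hφ : ∀ x, φ (φ x) = x := by
    simpa [φ] using conj_inv_conj_inv_of_sq_eq_one (hg ▸ pow_orderOf_eq_one g)
  have ht : (fun z : G => (g⁻¹ * z * g)⁻¹ * z) = twist φ := by
    funext z
    simp [twist, φ]
  have ht' : (fun z : G => (g⁻¹ * (1 * z⁻¹) * g) * z) = twist φ := by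
    funext z
    simp [twist, φ, mul_assoc]
  refine ⟨fun x n hn => ?_, fun a => ?_⟩
  · obtain ⟨m, rfl⟩ := Nat.exists_eq_add_of_le' hn
    rw [ht, twist_iterate_succ_of_involutive hφ, Nat.add_sub_cancel, ← ht]
  · rw [ht', twist_iterate_succ_of_involutive hφ]
    exact hexp _

/-- Let `G` be a simple group, `g ∈ G` of order two, and let `ĝ` be conjugation by `g`
(`ĝ x = g⁻¹ * x * g`). If `G` has exponent dividing `2^k`, then in the generalized
Alexander quandle `Q = Alex(G, ĝ)` with `x ▷ y = ĝ (y * x⁻¹) * x`, the `(k+1)`-fold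
right iteration `(…((a ▷ 1) ▷ 1)…) ▷ 1` equals `1` for every `a`. More precisely,
setting `t x = ĝ(x)⁻¹ * x`, one has `tⁿ x = (t x)^(2^(n-1))` for all `n ≥ 1`. -/
theorem alexander_simple_exponent_two_pow {G : Type*} [Group G]
    (hG : IsSimpleGroup G) (g : G) (hg : orderOf g = 2)
    (k : ℕ) (hexp : ∀ x : G, x ^ (2 ^ k) = 1) :
    (∀ (x : G) (n : ℕ), 1 ≤ n →
      (fun z : G => (g⁻¹ * z * g)⁻¹ * z)^[n] x =
        ((g⁻¹ * x * g)⁻¹ * x) ^ (2 ^ (n - 1))) ∧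
    (∀ a : G, (fun z : G => (g⁻¹ * (1 * z⁻¹) * g) * z)^[k + 1] a = 1) :=
  alexander_simple_exponent_two_pow_general g hg k hexp
end
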